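/- Let f : E → ℝ∪{+∞} be lower semicontinuous and prox-bounded, x a point with f(x) finite, and v ∈ E. If v is not a Fréchet subgradient of f at x, then liminf_{α↓0} (f_α(x+αv) − f(x))/α < |v|²/2, where f_α is the Moreau envelope. -/

import Mathlib

open Filter Topology

/-- The Moreau envelope. -/
noncomputable def mEnv {E : Type*} [NormedAddCommGroup E] [InnerProductSpace ℝ E]
    (f : E → EReal) (α : ℝ) (x : E) : EReal :=
  ⨅ y, f y + ((‖y - x‖ ^ 2 / (2 * α) : ℝ) : EReal)

/-- `v` is a Fréchet subgradient of `f` at `x`: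
`f(y) ≥ f(x) + ⟨v, y−x⟩ + o(‖y−x‖)`. -/
def FSubgrad {E : Type*} [NormedAddCommGroup E] [InnerProductSpace ℝ E]
    (f : E → EReal) (x v : E) : Prop :=
  ∀ ε : ℝ, 0 < ε → ∀ᶠ y in nhds x,
    f x + (((inner ℝ v (y - x) : ℝ) - ε * ‖y - x‖ : ℝ) : EReal) ≤ f y

/-- `f` is prox-bounded: it majorizes some quadratic. -/
def ProxBounded {E : Type*} [NormedAddCommGroup E] [InnerProductSpace ℝ E]
    (f : E → EReal) : Prop :=
  ∃ r c : ℝ, ∀ y, ((-(r / 2) * ‖y‖ ^ 2 - c : ℝ) : EReal) ≤ f y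

/-! The negation of `FSubgrad` gives `ε > 0` and points `y → x` with
`f y < f x + ⟪v, y - x⟫ - ε ‖y - x‖`. Testing the envelope at `x + α • v` with the point `y`,
where `α = ‖y - x‖ / ε`, bounds the difference quotient by `(‖v‖² - ε²) / 2`, and these `α`
tend to `0⁺`. -/

section

variable {E : Type*} [NormedAddCommGroup E] [InnerProductSpace ℝ E]

theorem inner_sub_mul_norm_add_norm_sub_smul_sq_div {u v : E} {ε α : ℝ} (hα : α ≠ 0)
    (hu : ‖u‖ = ε * α) :
    inner ℝ v u - ε * ‖u‖ + ‖u - α • v‖ ^ 2 / (2 * α) = α * ((‖v‖ ^ 2 - ε ^ 2) / 2) := by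
  rw [norm_sub_sq_real, norm_smul, real_inner_smul_right, hu, real_inner_comm u v]
  simp only [Real.norm_eq_abs, mul_pow, sq_abs]
  field_simp
  ring

theorem mEnv_le (f : E → EReal) (α : ℝ) (z y : E) :
    mEnv f α z ≤ f y + ((‖y - z‖ ^ 2 / (2 * α) : ℝ) : EReal) :=
  iInf_le (fun y ↦ f y + ((‖y - z‖ ^ 2 / (2 * α) : ℝ) : EReal)) y

theorem mEnv_sub_div_le_of_lt {f : E → EReal} {x v y : E} {fx ε α : ℝ}
    (hfx : f x = fx) (hα : 0 < α) (hyx : ‖y - x‖ = ε * α)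
    (hy : f y < f x + ((inner ℝ v (y - x) - ε * ‖y - x‖ : ℝ) : EReal)) :
    (mEnv f α (x + α • v) - f x) / (α : EReal) ≤ (((‖v‖ ^ 2 - ε ^ 2) / 2 : ℝ) : EReal) := by
  set q := ‖y - (x + α • v)‖ ^ 2 / (2 * α) with hq_def
  have hq : inner ℝ v (y - x) - ε * ‖y - x‖ + q = α * ((‖v‖ ^ 2 - ε ^ 2) / 2) := by
    rw [← inner_sub_mul_norm_add_norm_sub_smul_sq_div hα.ne' hyx, hq_def, sub_add_eq_sub_sub]
  have henv : mEnv f α (x + α • v) ≤ ((fx + α * ((‖v‖ ^ 2 - ε ^ 2) / 2) : ℝ) : EReal) :=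
    calc mEnv f α (x + α • v) ≤ f y + (q : EReal) := mEnv_le f α _ y
      _ ≤ ((fx + (inner ℝ v (y - x) - ε * ‖y - x‖) : ℝ) : EReal) + (q : EReal) := by
        rw [hfx] at hy
        gcongr
        exact_mod_cast hy.le
      _ = ((fx + α * ((‖v‖ ^ 2 - ε ^ 2) / 2) : ℝ) : EReal) := by
        rw [← EReal.coe_add, add_assoc, hq]
  rw [EReal.div_le_iff_le_mul (by exact_mod_cast hα) (EReal.coe_ne_top α), hfx]
  calc mEnv f α (x + α • v) - fx ≤ ((fx + α * ((‖v‖ ^ 2 - ε ^ 2) / 2) : ℝ) : EReal) - fx :=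
        EReal.sub_le_sub henv le_rfl
    _ = (α : EReal) * (((‖v‖ ^ 2 - ε ^ 2) / 2 : ℝ) : EReal) := by
        rw [← EReal.coe_sub, ← EReal.coe_mul, add_sub_cancel_left]

theorem exists_frequently_lt_of_not_fSubgrad {f : E → EReal} {x v : E} (hv : ¬ FSubgrad f x v) :
    ∃ ε > 0, ∃ᶠ y in 𝓝 x, f y < f x + ((inner ℝ v (y - x) - ε * ‖y - x‖ : ℝ) : EReal) := by
  simpa [FSubgrad, Filter.not_eventually] using hv

end

theorem tendsto_norm_sub_div_nhdsNE {E : Type*} [NormedAddCommGroup E] (x : E) {ε : ℝ}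
    (hε : 0 < ε) :
    Tendsto (fun y ↦ ‖y - x‖ / ε) (𝓝[≠] x) (𝓝[>] 0) := by
  refine tendsto_nhdsWithin_iff.2 ⟨?_, ?_⟩
  · have : Continuous fun y ↦ ‖y - x‖ / ε := by fun_prop
    simpa using (this.tendsto x).mono_left nhdsWithin_le_nhds
  · filter_upwards [self_mem_nhdsWithin] with y hy
    exact div_pos (norm_pos_iff.2 (sub_ne_zero.2 hy)) hε

theorem statement2_general {E : Type*} [NormedAddCommGroup E] [InnerProductSpace ℝ E]
    (f : E → EReal)
    (x : E) (fx : ℝ) (hfx : f x = (fx : EReal))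
    (v : E) (hv : ¬ FSubgrad f x v) :
    Filter.liminf (fun α : ℝ => (mEnv f α (x + α • v) - f x) / ((α : ℝ) : EReal))
        (nhdsWithin 0 (Set.Ioi 0))
      < ((‖v‖ ^ 2 / 2 : ℝ) : EReal) := by
  obtain ⟨ε, hε, hbad⟩ := exists_frequently_lt_of_not_fSubgrad hv
  have hbad_ne : ∃ᶠ y in 𝓝[≠] x,
      f y < f x + ((inner ℝ v (y - x) - ε * ‖y - x‖ : ℝ) : EReal) := by
    refine frequently_nhdsWithin_iff.2 (hbad.mono fun y hy ↦ ⟨hy, fun hyx ↦ ?_⟩)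
    simp [show y = x from hyx, hfx] at hy
  have hquot : ∃ᶠ α in 𝓝[>] 0, (mEnv f α (x + α • v) - f x) / (α : EReal) ≤
      (((‖v‖ ^ 2 - ε ^ 2) / 2 : ℝ) : EReal) := by
    refine (tendsto_norm_sub_div_nhdsNE x hε).frequently
      ((hbad_ne.and_eventually self_mem_nhdsWithin).mono fun y ⟨hy, hyx⟩ ↦ ?_)
    exact mEnv_sub_div_le_of_lt hfx (div_pos (norm_pos_iff.2 (sub_ne_zero.2 hyx)) hε)
      (by field_simp) hy
  calc _ ≤ (((‖v‖ ^ 2 - ε ^ 2) / 2 : ℝ) : EReal) := liminf_le_of_frequently_le' hquot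
    _ < _ := EReal.coe_lt_coe_iff.2 (by nlinarith)

/-- If `f` is lsc and prox-bounded, `f x` is finite, and `v` is NOT a Fréchet
subgradient of `f` at `x`, then `liminf_{α↓0} (f_α(x+αv) − f(x))/α < ‖v‖²/2`. -/
theorem statement2 {E : Type*} [NormedAddCommGroup E] [InnerProductSpace ℝ E]
    [FiniteDimensional ℝ E]
    (f : E → EReal) (hlsc : LowerSemicontinuous f) (hpb : ProxBounded f)
    (x : E) (fx : ℝ) (hfx : f x = (fx : EReal))
    (v : E) (hv : ¬ FSubgrad f x v) :
    Filter.liminf (fun α : ℝ => (mEnv f α (x + α • v) - f x) / ((α : ℝ) : EReal))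
        (nhdsWithin 0 (Set.Ioi 0))
      < ((‖v‖ ^ 2 / 2 : ℝ) : EReal) :=
  statement2_general f x fx hfx v hv
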